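/- (Lemma 1) Suppose every user k offloads a task of size β_k L_k ≥ 0 bits, each rate R_k is strictly positive, and all users share the same offloading time T, i.e., β_k L_k / R_k = T for every k ∈ {1,…,K}. Then for every k ∈ {1,…,K}, the offloading time can be equivalently expressed as T = (∑_{i=1}^{k} β_i L_i) / (B·log₂((∑_{i=1}^{k} P_i g_i + Nσ²)/(Nσ²))). -/

import Mathlib

/-!
Under SIC the rates telescope: users `0, …, k` together achieve `B log₂ (S / Nσ²)`, where `S` is
their total received power plus noise. A common offloading time `T` means `β_i L_i = T R_i`, so
`T` is the mediant `(∑ β_i L_i) / (∑ R_i)`.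
-/

open Finset Real

theorem sum_range_logb_div_eq {f : ℕ → ℝ} (hf : ∀ i, f i ≠ 0) (b : ℝ) (n : ℕ) :
    ∑ i ∈ range n, logb b (f (i + 1) / f i) = logb b (f n / f 0) := by
  simp only [logb_div (hf _) (hf _)]
  exact sum_range_sub (fun i => logb b (f i)) n

theorem sum_range_mul_logb_partialSums {x : ℕ → ℝ} (hx : ∀ i, 0 ≤ x i) {c : ℝ} (hc : 0 < c)
    (B b : ℝ) (n : ℕ) :
    ∑ i ∈ range n, B * logb b ((∑ j ∈ range (i + 1), x j + c) / (∑ j ∈ range i, x j + c)) =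
      B * logb b ((∑ j ∈ range n, x j + c) / c) := by
  have hS : ∀ m, ∑ j ∈ range m, x j + c ≠ 0 := fun m =>
    (add_pos_of_nonneg_of_pos (sum_nonneg fun j _ => hx j) hc).ne'
  rw [← mul_sum, sum_range_logb_div_eq hS, sum_range_zero, zero_add]

theorem eq_sum_div_sum_of_div_eq {ι : Type*} {s : Finset ι} (hs : s.Nonempty) {a r : ι → ℝ}
    (hr : ∀ i ∈ s, 0 < r i) {T : ℝ} (h : ∀ i ∈ s, a i / r i = T) :
    T = (∑ i ∈ s, a i) / ∑ i ∈ s, r i := by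
  have ha : ∑ i ∈ s, a i = T * ∑ i ∈ s, r i := by
    rw [mul_sum]
    refine sum_congr rfl fun i hi => ?_
    rw [← h i hi, div_mul_cancel₀ _ (hr i hi).ne']
  rw [ha, mul_div_cancel_right₀ _ (sum_pos hr hs).ne']

theorem equal_offload_time_equiv_general
    (K : ℕ)
    (P g : ℕ → ℝ) (hP : ∀ i, 0 ≤ P i) (hg : ∀ i, 0 ≤ g i)
    (B Nσ : ℝ) (hNσ : 0 < Nσ)
    (R : ℕ → ℝ)
    (hR : ∀ k, R k = B * Real.logb 2
      ((∑ i ∈ Finset.range (k + 1), P i * g i + Nσ) /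
        (∑ j ∈ Finset.range k, P j * g j + Nσ)))
    (β L : ℕ → ℝ)
    (hRpos : ∀ k < K, 0 < R k)
    (T : ℝ)
    (hT : ∀ k < K, β k * L k / R k = T) :
    ∀ k < K, T = (∑ i ∈ Finset.range (k + 1), β i * L i) /
      (B * Real.logb 2 ((∑ i ∈ Finset.range (k + 1), P i * g i + Nσ) / Nσ)) := by
  intro k hk
  have hprefix : ∀ i ∈ range (k + 1), i < K := fun i hi =>
    (Nat.lt_succ_iff.mp (mem_range.mp hi)).trans_lt hk
  rw [← sum_range_mul_logb_partialSums (fun i => mul_nonneg (hP i) (hg i)) hNσ,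
    ← sum_congr rfl fun i _ => hR i]
  exact eq_sum_div_sum_of_div_eq nonempty_range_add_one (fun i hi => hRpos i (hprefix i hi))
    fun i hi => hT i (hprefix i hi)

theorem equal_offload_time_equiv
    (K : ℕ) (hK : 1 ≤ K)
    (P g : ℕ → ℝ) (hP : ∀ i, 0 ≤ P i) (hg : ∀ i, 0 ≤ g i)
    (B Nσ : ℝ) (hB : 0 < B) (hNσ : 0 < Nσ)
    (R : ℕ → ℝ)
    (hR : ∀ k, R k = B * Real.logb 2
      ((∑ i ∈ Finset.range (k + 1), P i * g i + Nσ) /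
        (∑ j ∈ Finset.range k, P j * g j + Nσ)))
    (β L : ℕ → ℝ)
    (hβL : ∀ k, 0 ≤ β k * L k)
    (hRpos : ∀ k < K, 0 < R k)
    (T : ℝ)
    (hT : ∀ k < K, β k * L k / R k = T) :
    ∀ k < K, T = (∑ i ∈ Finset.range (k + 1), β i * L i) /
      (B * Real.logb 2 ((∑ i ∈ Finset.range (k + 1), P i * g i + Nσ) / Nσ)) :=
  equal_offload_time_equiv_general K P g hP hg B Nσ hNσ R hR β L hRpos T hT
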